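/- arXiv:1004.4208 — 5 statements merged into one kernel-verified Lean document; each statement's English description precedes it below -/
import Mathlib

section
/- If p is a nonzero skew-reciprocal polynomial over a field k of characteristic different from 2, then the multiplicity of the root 1 in p (i.e., the valuation of p at T-1) is odd. -/
/-!
Write `p = (X - 1)ⁿ q` with `n` the multiplicity of the root `1`, so that `q(1) ≠ 0`. Reversal is
multiplicative over a domain and `(X - 1)* = -(X - 1)`, so `p* = (-1)ⁿ (X - 1)ⁿ q*`; moreover
`q*(1) = q(1)`. Hence `p* = c p` forces `(-1)ⁿ q(1) = c q(1)`, i.e. `(-1)ⁿ = c`. For `c = -1` and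
`-1 ≠ 1` this says that `n` is odd.
-/

open Polynomial

namespace Polynomial

variable {R : Type*} [CommRing R]

theorem eval_one_reverse (p : R[X]) : p.reverse.eval 1 = p.eval 1 := by
  let _ := invertibleOne (α := R)
  simpa using eval₂_reverse_mul_pow (RingHom.id R) 1 p

theorem reverse_X_sub_one : (X - 1 : R[X]).reverse = -(X - 1) := by
  nontriviality R
  have hX : (X : R[X]).reverse = 1 := by
    simpa using (reverse_X_mul (1 : R[X])).trans (reverse_C 1)
  rw [sub_eq_add_neg, ← C_1, ← C_neg, reverse_add_C, hX]
  simp only [natDegree_X, pow_one, C_neg, C_1]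
  ring

theorem reverse_X_sub_one_pow (n : ℕ) :
    ((X - 1 : R[X]) ^ n).reverse = (-1) ^ n * (X - 1) ^ n := by
  nontriviality R
  have hmonic : (X - 1 : R[X]).Monic := by simpa using monic_X_sub_C (1 : R)
  induction n with
  | zero => simpa using reverse_C (1 : R)
  | succ n ih =>
    rw [pow_succ, reverse_mul (by simp [(hmonic.pow n).leadingCoeff, hmonic.leadingCoeff]), ih,
      reverse_X_sub_one]
    ring

theorem neg_one_pow_rootMultiplicity_one_of_reverse_eq [IsDomain R] {p : R[X]} (hp : p ≠ 0)
    {c : R} (hrev : p.reverse = C c * p) : (-1 : R) ^ p.rootMultiplicity 1 = c := by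
  set n := p.rootMultiplicity 1
  obtain ⟨q, hfac, hq⟩ : ∃ q : R[X], (X - 1) ^ n * q = p ∧ q.eval 1 ≠ 0 := by
    simpa only [C_1] using ⟨_, p.pow_mul_divByMonic_rootMultiplicity_eq 1,
      eval_divByMonic_pow_rootMultiplicity_ne_zero 1 hp⟩
  have hX : (X - 1 : R[X]) ≠ 0 := by simpa only [C_1] using X_sub_C_ne_zero (1 : R)
  have hrev_q : (-1) ^ n * q.reverse = C c * q := by
    refine mul_left_cancel₀ (pow_ne_zero n hX) ?_
    calc (X - 1) ^ n * ((-1) ^ n * q.reverse)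
        = ((X - 1 : R[X]) ^ n).reverse * q.reverse := by rw [reverse_X_sub_one_pow]; ring
      _ = p.reverse := by rw [← reverse_mul_of_domain, hfac]
      _ = (X - 1) ^ n * (C c * q) := by rw [hrev, ← hfac]; ring
  have heval := congrArg (eval 1) hrev_q
  simp only [eval_mul, eval_pow, eval_neg, eval_one, eval_C, eval_one_reverse] at heval
  exact mul_right_cancel₀ hq heval

end Polynomial

/-- For a nonzero skew-reciprocal polynomial over a field of characteristic
not 2, the multiplicity of the root 1 is odd. -/
theorem odd_rootMultiplicity_one_of_skew_reciprocal {k : Type*} [Field k]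
    (hchar : (2 : k) ≠ 0) (p : k[X]) (hp : p ≠ 0) (hskew : p.reverse = -p) :
    Odd (p.rootMultiplicity 1) := by
  have hneg_one : (-1 : k) ≠ 1 := fun h => hchar (by linear_combination -h)
  rw [← neg_one_pow_eq_neg_one_iff_odd hneg_one]
  exact neg_one_pow_rootMultiplicity_one_of_reverse_eq hp (by simpa using hskew)
end

section
/- Let p be a nonzero polynomial over a field k of characteristic not 2 with p* = -(-1)^{deg p} · p. Then p(-1) = 0, and moreover the multiplicity of the root -1 in p is odd. -/
/-!
Split off the root `-1`: `p = (X + 1)^m q` with `q(-1) ≠ 0`. Since `X + 1` is self-reciprocal,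
`q` inherits `q* = c q` with `c = -(-1)^(deg p)`, and evaluating at `-1 = (-1)⁻¹` gives
`c = (-1)^(deg q)`. As `deg p = m + deg q`, this forces `(-1)^m = -1`, i.e. `m` is odd.
-/

open Polynomial

namespace Polynomial

variable {R : Type*}

lemma monic_X_add_one [Semiring R] : (X + 1 : R[X]).Monic := by
  simpa using monic_X_add_C (1 : R)

lemma reverse_X_add_one [Semiring R] : (X + 1 : R[X]).reverse = X + 1 := by
  nontriviality R
  have hX : (X : R[X]).reverse = 1 := by rw [← one_mul X, reverse_mul_X, ← C_1, reverse_C]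
  rw [← C_1, reverse_add_C, hX, natDegree_X, pow_one]
  simp [add_comm]

lemma reverse_X_add_one_pow [Semiring R] [NoZeroDivisors R] (m : ℕ) :
    ((X + 1 : R[X]) ^ m).reverse = (X + 1) ^ m := by
  induction m with
  | zero => simpa using reverse_C (1 : R)
  | succ m ih => rw [pow_succ, reverse_mul_of_domain, ih, reverse_X_add_one]

lemma eval_neg_one_reverse [CommRing R] (p : R[X]) :
    p.reverse.eval (-1) = (-1) ^ p.natDegree * p.eval (-1) := by
  let : Invertible (-1 : R) := ⟨-1, by simp, by simp⟩
  have h : p.reverse.eval (-1) * (-1) ^ p.natDegree = p.eval (-1) :=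
    eval₂_reverse_mul_pow (RingHom.id R) (-1) p
  rw [← h, mul_left_comm, ← mul_pow, neg_one_mul, neg_neg, one_pow, mul_one]

lemma reverse_eq_C_mul_of_X_add_one_pow_mul [CommRing R] [IsDomain R] {q : R[X]} {c : R}
    (m : ℕ) (h : ((X + 1) ^ m * q).reverse = C c * ((X + 1) ^ m * q)) :
    q.reverse = C c * q := by
  rw [reverse_mul_of_domain, reverse_X_add_one_pow, mul_left_comm] at h
  exact mul_left_cancel₀ (monic_X_add_one.pow m).ne_zero h

lemma eq_neg_one_pow_of_reverse_eq_C_mul [CommRing R] [IsDomain R] {q : R[X]} {c : R}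
    (h : q.reverse = C c * q) (hq : q.eval (-1) ≠ 0) : c = (-1) ^ q.natDegree := by
  have h' := congrArg (eval (-1)) h
  rw [eval_neg_one_reverse, eval_C_mul] at h'
  exact (mul_right_cancel₀ hq h').symm

end Polynomial

/-- If `p` is nonzero and `p* = -(-1)^(deg p) • p` over a field of characteristic
not 2, then `p(-1) = 0` and the multiplicity of the root `-1` in `p` is odd. -/
theorem eval_neg_one_and_odd_multiplicity {k : Type*} [Field k]
    (hchar : (2 : k) ≠ 0) (p : k[X]) (hp : p ≠ 0)
    (hrec : p.reverse = -((-1 : k[X]) ^ p.natDegree * p)) :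
    p.eval (-1) = 0 ∧ Odd (p.rootMultiplicity (-1)) := by
  set m := p.rootMultiplicity (-1)
  obtain ⟨q, hfac, hq⟩ : ∃ q : k[X], (X + 1) ^ m * q = p ∧ q.eval (-1) ≠ 0 :=
    ⟨_, by simpa using p.pow_mul_divByMonic_rootMultiplicity_eq (-1),
      eval_divByMonic_pow_rootMultiplicity_ne_zero (-1) hp⟩
  have hdeg : p.natDegree = m + q.natDegree := by
    rw [← hfac, (monic_X_add_one.pow m).natDegree_mul' (fun h ↦ by simp [h] at hq),
      natDegree_pow, ← C_1, natDegree_X_add_C, mul_one]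
  have hc : -(-1 : k) ^ p.natDegree = (-1) ^ q.natDegree := by
    refine eq_neg_one_pow_of_reverse_eq_C_mul (reverse_eq_C_mul_of_X_add_one_pow_mul m ?_) hq
    rw [hfac, hrec]
    simp
  have hm : Odd m := by
    refine (neg_one_pow_eq_neg_one_iff_odd fun h ↦ hchar (by linear_combination -h)).mp ?_
    rw [hdeg, pow_add] at hc
    have hc' : (-1 : k) ^ m * (-1) ^ q.natDegree = -1 * (-1) ^ q.natDegree := by
      linear_combination -hc
    exact mul_right_cancel₀ (pow_ne_zero _ (neg_ne_zero.mpr one_ne_zero)) hc'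
  exact ⟨(rootMultiplicity_pos hp).mp hm.pos, hm⟩
end

section
/- Let p, q be monic polynomials of degree d over a field k of characteristic not 2, with q reciprocal and p (-ε)-reciprocal for ε = ±1. Write w := -εp/q = 1 + Σ_{n≥1} c_n T^n as a power series at 0. Then the linear functional c on k[T,T^{-1}] defined by c(1) = 1+ε, c(T^n) = ε c_n and c(T^{-n}) = c_n for n ≥ 1 vanishes on the ideal generated by q; equivalently, q(T)·(Σ_{n≥0} c_n T^{-n} + ε Σ_{n≥0} c_n T^n) = 0 as a formal Laurent series (where c_0 = 1). -/
/-!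
Write `cf n = E (-n) + ε * E n`, where `E` extends `c` by zero to `ℤ`; it suffices that every
shift of `q` annihilates `cf`, i.e. `∑ⱼ qⱼ cf (j + m) = 0`. Put `r := -ε p = q * ∑ cₙ Tⁿ`.
The `E (-n)` part of the sum is the coefficient `r₋ₘ`, and since `q` is reciprocal the `E n` part
is `ε r_{d+m}`. As `r` is `(-ε)`-reciprocal, `r_{d+m} = -ε r₋ₘ`, so the sum is `(1 - ε²) r₋ₘ = 0`.
-/

open Polynomial Finset

def extendByZero {R : Type*} [Zero R] (c : ℕ → R) (n : ℤ) : R := if 0 ≤ n then c n.toNat else 0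

@[simp]
theorem extendByZero_natCast {R : Type*} [Zero R] (c : ℕ → R) (n : ℕ) :
    extendByZero c n = c n := by
  simp [extendByZero]

theorem extendByZero_of_neg {R : Type*} [Zero R] (c : ℕ → R) {n : ℤ} (hn : n < 0) :
    extendByZero c n = 0 :=
  if_neg hn.not_ge

theorem eq_extendByZero_neg_add_mul_extendByZero {R : Type*} [Semiring R] {c : ℕ → R}
    {cf : ℤ → R} {ε : R} (hc0 : c 0 = 1) (hcf0 : cf 0 = 1 + ε)
    (hcfpos : ∀ n : ℕ, 0 < n → cf n = ε * c n) (hcfneg : ∀ n : ℕ, 0 < n → cf (-n) = c n)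
    (n : ℤ) : cf n = extendByZero c (-n) + ε * extendByZero c n := by
  obtain ⟨k, rfl | rfl⟩ := n.eq_nat_or_neg <;> rcases k.eq_zero_or_pos with rfl | hk
  · simp [extendByZero, hcf0, hc0]
  · rw [hcfpos k hk, extendByZero_of_neg _ (by omega), extendByZero_natCast, zero_add]
  · simp [extendByZero, hcf0, hc0]
  · rw [hcfneg k hk, neg_neg, extendByZero_natCast, extendByZero_of_neg _ (by omega), mul_zero,
      add_zero]

namespace Polynomial

variable {R : Type*} [Semiring R]

theorem coeff_sub_of_reflect_eq_C_mul {p : R[X]} {d j : ℕ} {a : R}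
    (h : p.reflect d = C a * p) (hj : j ≤ d) : p.coeff (d - j) = a * p.coeff j := by
  rw [← coeff_C_mul, ← h, coeff_reflect, revAt_le hj]

theorem extendByZero_coeff_sub_of_reflect_eq_C_mul {p : R[X]} {d : ℕ} {a : R}
    (h : p.reflect d = C a * p) (hp : p.natDegree ≤ d) (n : ℤ) :
    extendByZero p.coeff (d - n) = a * extendByZero p.coeff n := by
  rcases lt_or_ge n 0 with hn | hn
  · lift d - n to ℕ using (by omega) with k hk
    rw [extendByZero_natCast, coeff_eq_zero_of_natDegree_lt (by omega),
      extendByZero_of_neg _ hn, mul_zero]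
  lift n to ℕ using hn
  rcases le_or_gt n d with hnd | hnd
  · rw [← Nat.cast_sub hnd, extendByZero_natCast, extendByZero_natCast,
      coeff_sub_of_reflect_eq_C_mul h hnd]
  · rw [extendByZero_of_neg _ (by omega), extendByZero_natCast,
      coeff_eq_zero_of_natDegree_lt (by omega), mul_zero]

theorem sum_range_coeff_mul_sub_of_reflect_eq_C_mul {p : R[X]} {d : ℕ} {a : R}
    (h : p.reflect d = C a * p) (g : ℤ → R) :
    ∑ j ∈ range (d + 1), p.coeff j * g (d - j) = a * ∑ j ∈ range (d + 1), p.coeff j * g j := by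
  rw [← sum_range_reflect, mul_sum]
  refine sum_congr rfl fun j hj => ?_
  rw [mem_range] at hj
  rw [show d + 1 - 1 - j = d - j by omega, coeff_sub_of_reflect_eq_C_mul h (by omega), mul_assoc,
    Nat.cast_sub (by omega), sub_sub_cancel]

theorem sum_range_coeff_mul_extendByZero_sub {q r : R[X]} {c : ℕ → R} {d : ℕ}
    (hq : q.natDegree ≤ d) (h : (q : PowerSeries R) * PowerSeries.mk c = r) (m : ℤ) :
    ∑ j ∈ range (d + 1), q.coeff j * extendByZero c (m - j) = extendByZero r.coeff m := by
  rcases lt_or_ge m 0 with hm | hm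
  · rw [extendByZero_of_neg _ hm]
    exact sum_eq_zero fun j _ => by rw [extendByZero_of_neg _ (by omega), mul_zero]
  lift m to ℕ using hm
  set F : ℕ → R := fun j => q.coeff j * extendByZero c (m - j)
  have hF : ∀ j, d < j ∨ m < j → F j = 0 := by
    rintro j (hj | hj)
    · simp only [F, coeff_eq_zero_of_natDegree_lt (hq.trans_lt hj), zero_mul]
    · simp only [F, extendByZero_of_neg _ (by omega : (m : ℤ) - j < 0), mul_zero]
  have hsum (n : ℕ) (hn : d ≤ n ∨ m ≤ n) :
      ∑ j ∈ range (n + 1), F j = ∑ j ∈ range (min d m + 1), F j :=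
    (sum_subset (range_subset_range.2 (by omega))
      fun j _ hj => hF j (by rw [mem_range] at hj; omega)).symm
  have hr : r.coeff m = ∑ j ∈ range (m + 1), F j := by
    rw [← coeff_coe, ← h, PowerSeries.coeff_mul, Nat.sum_antidiagonal_eq_sum_range_succ_mk]
    refine sum_congr rfl fun j hj => ?_
    rw [mem_range] at hj
    simp only [F, coeff_coe, PowerSeries.coeff_mk, ← Nat.cast_sub (by omega : j ≤ m),
      extendByZero_natCast]
  rw [extendByZero_natCast, hr, hsum d (.inl le_rfl), hsum m (.inr le_rfl)]

end Polynomial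

namespace LaurentPolynomial

variable {R : Type*} [CommSemiring R]

theorem sum_coeff_mul_eq_zero_of_mem_span_toLaurent {q : R[X]} {d : ℕ} (hq : q.natDegree ≤ d)
    {f : ℤ → R} (h : ∀ m : ℤ, ∑ j ∈ range (d + 1), q.coeff j * f (j + m) = 0) :
    ∀ u ∈ Ideal.span {toLaurent q}, u.coeff.sum (fun n a => a * f n) = 0 := by
  set φ : R[T;T⁻¹] →ₗ[R] R :=
    Finsupp.linearCombination R f ∘ₗ (AddMonoidAlgebra.coeffLinearEquiv R).toLinearMap
  have hφ (u : R[T;T⁻¹]) : φ u = u.coeff.sum (fun n a => a * f n) := by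
    simp [φ, Finsupp.linearCombination_apply]
  have hφ_monomial (a : R) (n : ℤ) : φ (C a * T n) = a * f n := by
    rw [hφ, ← single_eq_C_mul_T, AddMonoidAlgebra.coeff_single,
      Finsupp.sum_single_index (zero_mul _)]
  have hq_sum : toLaurent q = ∑ j ∈ range (d + 1), C (q.coeff j) * T j := by
    conv_lhs => rw [q.as_sum_range' (d + 1) (by omega)]
    simp only [map_sum, toLaurent_C_mul_T]
  intro u hu
  obtain ⟨r, rfl⟩ := Ideal.mem_span_singleton'.1 hu
  clear hu
  rw [← hφ]
  induction r using LaurentPolynomial.induction_on' with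
  | add r s hr hs => rw [add_mul, map_add, hr, hs, add_zero]
  | C_mul_T m a =>
    have hterm (j : ℕ) : C a * T m * (C (q.coeff j) * T j) = C (a * q.coeff j) * T (j + m) := by
      rw [map_mul, T_add]; ring
    rw [hq_sum, mul_sum, map_sum]
    simp only [hterm, hφ_monomial, mul_assoc]
    rw [← mul_sum, h, mul_zero]

end LaurentPolynomial

theorem skewBezoutian_functional_vanishes_on_ideal_general {k : Type*} [Field k]
    (ε : k) (hε : ε = 1 ∨ ε = -1)
    (p q : k[X]) (d : ℕ)
    (hpd : p.natDegree = d) (hqd : q.natDegree = d)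
    (hqrec : q.reverse = q) (hprec : p.reverse = C (-ε) * p)
    (c : ℕ → k) (hc0 : c 0 = 1)
    (hc : (q : PowerSeries k) * PowerSeries.mk c = PowerSeries.C (-ε) * (p : PowerSeries k))
    (cf : ℤ → k) (hcf0 : cf 0 = 1 + ε)
    (hcfpos : ∀ n : ℕ, 0 < n → cf (n : ℤ) = ε * c n)
    (hcfneg : ∀ n : ℕ, 0 < n → cf (-(n : ℤ)) = c n) :
    ∀ u ∈ Ideal.span {Polynomial.toLaurent q},
      Finsupp.sum u.coeff (fun n a => a * cf n) = 0 := by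
  set r := C (-ε) * p
  have hq : q.reflect d = C 1 * q := by rw [C_1, one_mul, ← hqd]; exact hqrec
  have hr : r.reflect d = C (-ε) * r := by rw [reflect_C_mul, ← hpd]; exact congrArg _ hprec
  have hrd : r.natDegree ≤ d := (natDegree_C_mul_le _ _).trans hpd.le
  have hconv := sum_range_coeff_mul_extendByZero_sub (c := c) (r := r) hqd.le
    (by rwa [Polynomial.coe_mul, coe_C])
  have hε2 : ε * ε = 1 := by rcases hε with rfl | rfl <;> norm_num
  refine LaurentPolynomial.sum_coeff_mul_eq_zero_of_mem_span_toLaurent hqd.le fun m => ?_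
  have hflip : ∑ j ∈ range (d + 1), q.coeff j * extendByZero c (j + m) =
      ∑ j ∈ range (d + 1), q.coeff j * extendByZero c (d + m - j) := by
    rw [← one_mul (∑ j ∈ range (d + 1), _),
      ← sum_range_coeff_mul_sub_of_reflect_eq_C_mul hq fun i => extendByZero c (i + m)]
    simp only [sub_add_eq_add_sub]
  calc ∑ j ∈ range (d + 1), q.coeff j * cf (j + m)
      = ∑ j ∈ range (d + 1), q.coeff j * extendByZero c (-m - j) +
          ε * ∑ j ∈ range (d + 1), q.coeff j * extendByZero c (d + m - j) := by
        rw [← hflip, mul_sum, ← sum_add_distrib]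
        refine sum_congr rfl fun j _ => ?_
        rw [eq_extendByZero_neg_add_mul_extendByZero hc0 hcf0 hcfpos hcfneg, neg_add_rev,
          ← sub_eq_add_neg]
        ring
    _ = extendByZero r.coeff (-m) + ε * extendByZero r.coeff (d - -m) := by
        rw [hconv, hconv, sub_neg_eq_add]
    _ = 0 := by
        rw [extendByZero_coeff_sub_of_reflect_eq_C_mul hr hrd]
        linear_combination (-extendByZero r.coeff (-m)) * hε2

/-- The linear functional `c` on `k[T,T⁻¹]` with `c(1) = 1+ε`, `c(Tⁿ) = ε cₙ`
and `c(T⁻ⁿ) = cₙ` for `n ≥ 1` (where the `cₙ` are the power-series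
coefficients of `-εp/q` at `0`) vanishes on the ideal generated by `q`. -/
theorem skewBezoutian_functional_vanishes_on_ideal {k : Type*} [Field k]
    (hchar : (2 : k) ≠ 0) (ε : k) (hε : ε = 1 ∨ ε = -1)
    (p q : k[X]) (d : ℕ) (hd : 0 < d)
    (hpm : p.Monic) (hqm : q.Monic)
    (hpd : p.natDegree = d) (hqd : q.natDegree = d)
    (hqrec : q.reverse = q) (hprec : p.reverse = C (-ε) * p)
    (c : ℕ → k) (hc0 : c 0 = 1)
    (hc : (q : PowerSeries k) * PowerSeries.mk c = PowerSeries.C (-ε) * (p : PowerSeries k))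
    (cf : ℤ → k) (hcf0 : cf 0 = 1 + ε)
    (hcfpos : ∀ n : ℕ, 0 < n → cf (n : ℤ) = ε * c n)
    (hcfneg : ∀ n : ℕ, 0 < n → cf (-(n : ℤ)) = c n) :
    ∀ u ∈ Ideal.span {Polynomial.toLaurent q},
      Finsupp.sum u.coeff (fun n a => a * cf n) = 0 :=
  skewBezoutian_functional_vanishes_on_ideal_general ε hε p q d hpd hqd hqrec hprec c hc0 hc cf hcf0
    hcfpos hcfneg
end

section
/- Let M be an automorphism of a finite-dimensional vector space V over an algebraically closed field k of characteristic not 2, and suppose M preserves a non-degenerate symmetric bilinear form on V. Then for every λ ∈ k* with λ ≠ λ^{-1} and every m ≥ 1, the number of Jordan blocks of M of size m with eigenvalue λ equals the number of Jordan blocks of size m with eigenvalue λ^{-1}. -/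
/-- The number of Jordan blocks of `M` of eigenvalue `l` and size `m`
(computed, as an integer, from the dimensions of the kernels of powers of
`M - l·id`). -/
noncomputable def jordanBlockCount {k V : Type*} [Field k] [AddCommGroup V]
    [Module k V] (M : V →ₗ[k] V) (l : k) (m : ℕ) : ℤ :=
  2 * (Module.finrank k (LinearMap.ker ((M - l • (1 : V →ₗ[k] V)) ^ m)) : ℤ)
    - (Module.finrank k (LinearMap.ker ((M - l • (1 : V →ₗ[k] V)) ^ (m - 1))) : ℤ)
    - (Module.finrank k (LinearMap.ker ((M - l • (1 : V →ₗ[k] V)) ^ (m + 1))) : ℤ)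

/-!
Orthogonality of `M` makes `M - λ` adjoint to `M⁻¹ - λ = -λ M⁻¹ (M - λ⁻¹)`, and the same
holds for `n`-th powers. A map and its adjoint with respect to a nondegenerate form have equal
rank, so `ker (M - λ)ⁿ` and `ker (M - λ⁻¹)ⁿ` have equal dimension for every `n`; the block
counts are computed from these dimensions.
-/

open LinearMap Module

section

variable {R V : Type*} [CommRing R] [AddCommGroup V] [Module R V]

theorem LinearMap.IsAdjointPair.pow {Ψ : LinearMap.BilinForm R V} {A B : Module.End R V}
    (h : IsAdjointPair Ψ Ψ A B) (n : ℕ) : IsAdjointPair Ψ Ψ ⇑(A ^ n) ⇑(B ^ n) := by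
  induction n with
  | zero => exact isAdjointPair_one
  | succ n ih => rw [pow_succ, pow_succ']; exact ih.mul h

theorem LinearMap.IsOrthogonal.isAdjointPair_sub_smul {Ψ : LinearMap.BilinForm R V}
    {M : V ≃ₗ[R] V} (hM : Ψ.IsOrthogonal M) (l : R) :
    IsAdjointPair Ψ Ψ ⇑((M : Module.End R V) - l • 1)
      ⇑((M.symm : Module.End R V) - l • 1) := by
  have hMadj : IsAdjointPair Ψ Ψ M M.symm :=
    (LinearEquiv.isAdjointPair_symm_iff (f := M.toEquiv)).mpr hM
  exact hMadj.sub (isAdjointPair_one.smul l)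

end

section

variable {k V : Type*} [Field k] [AddCommGroup V] [Module k V]

theorem LinearEquiv.ker_pow_symm_sub_smul (M : V ≃ₗ[k] V) {l : k} (hl : l ≠ 0) (n : ℕ) :
    ker (((M.symm : Module.End k V) - l • 1) ^ n)
      = ker (((M : Module.End k V) - l⁻¹ • 1) ^ n) := by
  have hfactor : (M.symm : Module.End k V) - l • 1
      = (-l) • ((M.symm : Module.End k V) * ((M : Module.End k V) - l⁻¹ • 1)) := by
    ext x
    simp [smul_sub, hl]
  have hcomm : Commute (M.symm : Module.End k V) ((M : Module.End k V) - l⁻¹ • 1) := by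
    ext x
    simp
  have hinj : ker ((M.symm : Module.End k V) ^ n) = ⊥ := by
    rw [ker_eq_bot, Module.End.coe_pow]
    exact M.symm.injective.iterate n
  rw [hfactor, smul_pow, ker_smul _ _ (pow_ne_zero _ (neg_ne_zero.mpr hl)), hcomm.mul_pow,
    Module.End.mul_eq_comp, ker_comp_of_ker_eq_bot _ hinj]

variable [FiniteDimensional k V]

theorem LinearMap.finrank_ker_dualMap (B : Module.End k V) :
    finrank k (ker B.dualMap) = finrank k (ker B) := by
  have hdual := B.dualMap.finrank_range_add_finrank_ker
  have hB := B.finrank_range_add_finrank_ker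
  rw [B.finrank_range_dualMap_eq_finrank_range, Subspace.dual_finrank_eq] at hdual
  omega

theorem LinearMap.SeparatingLeft.finrank_ker_eq_of_isAdjointPair {Ψ : V →ₗ[k] V →ₗ[k] k}
    (hΨ : Ψ.SeparatingLeft) {A B : Module.End k V} (h : IsAdjointPair Ψ Ψ A B) :
    finrank k (ker A) = finrank k (ker B) := by
  have hinj : Function.Injective Ψ := ker_eq_bot.mp (separatingLeft_iff_ker_eq_bot.mp hΨ)
  let e : V ≃ₗ[k] Dual k V := Ψ.linearEquivOfInjective hinj Subspace.dual_finrank_eq.symm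
  have hintertwine : Ψ ∘ₗ A = B.dualMap ∘ₗ e := by
    ext u v
    exact h u v
  have hker : ker A = (ker B.dualMap).comap (e : V →ₗ[k] Dual k V) := by
    rw [← ker_comp, ← hintertwine, ker_comp_of_ker_eq_bot _ (ker_eq_bot.mpr hinj)]
  rw [hker, Submodule.comap_equiv_eq_map_symm, LinearEquiv.finrank_map_eq,
    finrank_ker_dualMap]

theorem LinearMap.IsOrthogonal.finrank_ker_pow_sub_smul_inv
    {Ψ : V →ₗ[k] V →ₗ[k] k} (hΨ : Ψ.SeparatingLeft) {M : V ≃ₗ[k] V} (hM : Ψ.IsOrthogonal M)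
    {l : k} (hl : l ≠ 0) (n : ℕ) :
    finrank k (ker (((M : Module.End k V) - l • 1) ^ n))
      = finrank k (ker (((M : Module.End k V) - l⁻¹ • 1) ^ n)) := by
  rw [hΨ.finrank_ker_eq_of_isAdjointPair ((hM.isAdjointPair_sub_smul l).pow n),
    M.ker_pow_symm_sub_smul hl]

end

theorem jordan_blocks_inverse_eigenvalues_general {k V : Type*} [Field k]
    [AddCommGroup V] [Module k V] [FiniteDimensional k V]
    (M : V ≃ₗ[k] V)
    (Ψ : V →ₗ[k] V →ₗ[k] k)
    (hnd : ∀ u : V, (∀ v : V, Ψ u v = 0) → u = 0)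
    (hM : ∀ u v, Ψ (M u) (M v) = Ψ u v)
    (l : k) (hl0 : l ≠ 0) (m : ℕ) :
    jordanBlockCount (M : V →ₗ[k] V) l m = jordanBlockCount (M : V →ₗ[k] V) l⁻¹ m := by
  have hdim := IsOrthogonal.finrank_ker_pow_sub_smul_inv hnd hM hl0
  simp only [jordanBlockCount, hdim]

/-- If an automorphism `M` of a finite-dimensional space over an algebraically
closed field of characteristic not 2 preserves a non-degenerate symmetric
bilinear form, then for `λ ≠ λ⁻¹` the numbers of Jordan blocks of size `m`
with eigenvalues `λ` and `λ⁻¹` agree. -/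
theorem jordan_blocks_inverse_eigenvalues {k V : Type*} [Field k]
    [IsAlgClosed k] [AddCommGroup V] [Module k V] [FiniteDimensional k V]
    (hchar : (2 : k) ≠ 0) (M : V ≃ₗ[k] V)
    (Ψ : V →ₗ[k] V →ₗ[k] k)
    (hsymm : ∀ u v, Ψ u v = Ψ v u)
    (hnd : ∀ u : V, (∀ v : V, Ψ u v = 0) → u = 0)
    (hM : ∀ u v, Ψ (M u) (M v) = Ψ u v)
    (l : k) (hl0 : l ≠ 0) (hl : l ≠ l⁻¹) (m : ℕ) (hm : 1 ≤ m) :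
    jordanBlockCount (M : V →ₗ[k] V) l m = jordanBlockCount (M : V →ₗ[k] V) l⁻¹ m :=
  jordan_blocks_inverse_eigenvalues_general M Ψ hnd hM l hl0 m
end

section
/- Let M be an automorphism of a finite-dimensional vector space V over an algebraically closed field k of characteristic not 2 preserving a non-degenerate symmetric bilinear form. Then for each even m ≥ 1 and each eigenvalue λ = ±1, the number of Jordan blocks of M of size m with eigenvalue λ is even. -/
/-!
Put `N = M - l`. As `M` is `Ψ`-orthogonal and `l² = 1`, the `Ψ`-adjoint of `N` is
`M⁻¹ - l = U N` with `U = -l M⁻¹`, which commutes with `N` and acts as `-1` on `ker N`.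
Hence `(range Nʲ)ᗮ = ker Nʲ` and `(ker Nʲ)ᗮ = range Nʲ`. For odd `n`, the form
`(u, v) ↦ Ψ u (Nⁿ v)` on `ker Nⁿ⁺¹` is therefore skew-symmetric with radical
`ker Nⁿ + N (ker Nⁿ⁺²)`, so its rank, which is
`2 dim ker Nⁿ⁺¹ - dim ker Nⁿ - dim ker Nⁿ⁺²`, is even: in characteristic `≠ 2` a
nondegenerate skew-symmetric Gram matrix `A` has `det A = det Aᵀ = (-1)^dim · det A ≠ 0`.
-/

open Module LinearMap Submodule

theorem LinearMap.IsAdjointPair.pow_s19 {R M M₁ : Type*} [CommSemiring R] [AddCommMonoid M]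
    [Module R M] [AddCommMonoid M₁] [Module R M₁] {B : M →ₗ[R] M →ₗ[R] M₁}
    {f g : Module.End R M} (h : IsAdjointPair B B f g) (n : ℕ) :
    IsAdjointPair B B ⇑(f ^ n) ⇑(g ^ n) := by
  induction n with
  | zero => exact isAdjointPair_one
  | succ n ih => rw [pow_succ, pow_succ']; exact ih.mul h

theorem Module.End.pow_apply_of_apply_eq_smul {R M : Type*} [CommSemiring R] [AddCommMonoid M]
    [Module R M] {f : Module.End R M} {μ : R} {x : M} (hx : f x = μ • x) (n : ℕ) :
    (f ^ n) x = μ ^ n • x := by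
  induction n with
  | zero => simp
  | succ n ih => rw [pow_succ, Module.End.mul_apply, hx, map_smul, ih, smul_smul, pow_succ']

section KernelFiltration

variable {R M : Type*} [Ring R] [AddCommGroup M] [Module R M] (N : Module.End R M)

theorem Module.End.ker_pow_mono : Monotone fun n : ℕ => ker (N ^ n) :=
  monotone_nat_of_le_succ fun n => by
    simpa only [pow_succ', Module.End.mul_eq_comp] using ker_le_ker_comp (N ^ n) N

theorem Module.End.map_ker_pow_succ (j : ℕ) :
    map N (ker (N ^ (j + 1))) = range N ⊓ ker (N ^ j) := by
  rw [pow_succ, Module.End.mul_eq_comp, ker_comp, map_comap_eq]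

theorem Module.End.map_pow_ker_pow_succ (j : ℕ) :
    map (N ^ j) (ker (N ^ (j + 1))) = range (N ^ j) ⊓ ker N := by
  rw [pow_succ', Module.End.mul_eq_comp, ker_comp, map_comap_eq]

theorem Module.End.ker_pow_inf_map_ker_pow_add_two (m : ℕ) :
    ker (N ^ m) ⊓ map N (ker (N ^ (m + 2))) = map N (ker (N ^ (m + 1))) := by
  rw [N.map_ker_pow_succ, N.map_ker_pow_succ, inf_left_comm,
    inf_eq_left.mpr (N.ker_pow_mono m.le_succ)]

theorem Module.End.ker_pow_succ_inf_sup_range (m : ℕ) :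
    ker (N ^ (m + 1)) ⊓ (ker (N ^ m) ⊔ range N) = ker (N ^ m) ⊔ map N (ker (N ^ (m + 2))) := by
  rw [inf_comm, sup_inf_assoc_of_le _ (N.ker_pow_mono m.le_succ), N.map_ker_pow_succ]

end KernelFiltration

section KernelDimensions

variable {k V : Type*} [Field k] [AddCommGroup V] [Module k V] [FiniteDimensional k V]

theorem LinearMap.finrank_map_add_finrank_ker_of_le {V₂ : Type*} [AddCommGroup V₂] [Module k V₂]
    (f : V →ₗ[k] V₂) {W : Submodule k V} (h : ker f ≤ W) :
    finrank k (W.map f) + finrank k (ker f) = finrank k W := by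
  rw [← range_domRestrict, ← (comapSubtypeEquivOfLe h).finrank_eq, ← ker_domRestrict]
  exact finrank_range_add_finrank_ker _

variable (N : Module.End k V)

theorem Module.End.finrank_map_ker_pow_succ (j : ℕ) :
    finrank k (map N (ker (N ^ (j + 1)))) + finrank k (ker N) = finrank k (ker (N ^ (j + 1))) :=
  N.finrank_map_add_finrank_ker_of_le (by simpa using N.ker_pow_mono (Nat.le_add_left 1 j))

theorem Module.End.finrank_ker_pow_succ_sub_finrank_sup (m : ℕ) :
    (finrank k (ker (N ^ (m + 1))) : ℤ) - finrank k ↥(ker (N ^ m) ⊔ map N (ker (N ^ (m + 2))))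
      = 2 * finrank k (ker (N ^ (m + 1))) - finrank k (ker (N ^ m))
        - finrank k (ker (N ^ (m + 2))) := by
  have hsup := finrank_sup_add_finrank_inf_eq (ker (N ^ m)) (map N (ker (N ^ (m + 2))))
  rw [N.ker_pow_inf_map_ker_pow_add_two] at hsup
  have h1 := N.finrank_map_ker_pow_succ m
  have h2 : finrank k (map N (ker (N ^ (m + 2)))) + finrank k (ker N)
      = finrank k (ker (N ^ (m + 2))) :=
    N.finrank_map_ker_pow_succ (m + 1)
  omega

end KernelDimensions

theorem LinearMap.IsRefl.separatingLeft_domRestrict₁₂_of_isCompl_ker {R M M₁ : Type*}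
    [CommRing R] [AddCommGroup M] [Module R M] [AddCommGroup M₁] [Module R M₁]
    {B : M →ₗ[R] M →ₗ[R] M₁} (hB : B.IsRefl) {C : Submodule R M} (hC : IsCompl C (ker B)) :
    (B.domRestrict₁₂ C C).SeparatingLeft := by
  rintro ⟨x, hx⟩ hxC
  suffices x ∈ C ⊓ ker B by simpa [hC.inf_eq_bot] using this
  refine ⟨hx, LinearMap.ext fun y => ?_⟩
  obtain ⟨c, hc, r, hr, rfl⟩ : ∃ c ∈ C, ∃ r ∈ ker B, c + r = y := by
    rw [← Submodule.mem_sup, hC.sup_eq_top]; exact Submodule.mem_top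
  have hxr : B x r = 0 := hB r x (by rw [mem_ker.mp hr, zero_apply])
  simpa [hxr] using! hxC ⟨c, hc⟩

section SkewForms

variable {k W : Type*} [Field k] [AddCommGroup W] [Module k W] [FiniteDimensional k W]

theorem LinearMap.BilinForm.even_finrank_of_skew_of_separatingLeft (hchar : (2 : k) ≠ 0)
    {B : LinearMap.BilinForm k W} (hskew : ∀ x y, B x y = -B y x) (hB : B.SeparatingLeft) :
    Even (finrank k W) := by
  let b := finBasis k W
  set A := BilinForm.toMatrix b B
  have hrefl : B.IsRefl := fun x y h => by rw [hskew, h, neg_zero]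
  have hdet : A.det ≠ 0 :=
    (BilinForm.nondegenerate_iff_det_ne_zero b).mp (hrefl.nondegenerate_iff_separatingLeft.mpr hB)
  have hA : A.transpose = -A := by
    ext i j
    simp [A, BilinForm.toMatrix_apply, hskew (b j)]
  have hdet_eq : A.det = (-1) ^ finrank k W * A.det := by
    conv_lhs => rw [← Matrix.det_transpose, hA, Matrix.det_neg, Fintype.card_fin]
  by_contra hodd
  rw [(Nat.not_even_iff_odd.mp hodd).neg_one_pow] at hdet_eq
  exact hdet ((mul_eq_zero.mp (by linear_combination hdet_eq : (2 : k) * A.det = 0)).resolve_left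
    hchar)

theorem LinearMap.BilinForm.even_finrank_range_of_skew (hchar : (2 : k) ≠ 0)
    {B : LinearMap.BilinForm k W} (hskew : ∀ x y, B x y = -B y x) : Even (finrank k (range B)) := by
  obtain ⟨C, hC⟩ := (ker B).exists_isCompl
  have hrefl : B.IsRefl := fun x y h => by rw [hskew, h, neg_zero]
  have hC_even : Even (finrank k C) :=
    even_finrank_of_skew_of_separatingLeft hchar (B := B.domRestrict₁₂ C C)
      (fun x y => hskew x y) (hrefl.separatingLeft_domRestrict₁₂_of_isCompl_ker hC.symm)
  have hC_finrank := finrank_add_eq_of_isCompl hC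
  have hrank := finrank_range_add_finrank_ker B
  rwa [show finrank k (range B) = finrank k C by omega]

end SkewForms

section Orthogonal

variable {k V : Type*} [Field k] [AddCommGroup V] [Module k V] {B : LinearMap.BilinForm k V}

theorem LinearMap.BilinForm.orthogonal_sup (W U : Submodule k V) :
    B.orthogonal (W ⊔ U) = B.orthogonal W ⊓ B.orthogonal U := by
  ext x
  simp only [mem_orthogonal_iff, Submodule.mem_inf, Submodule.mem_sup]
  refine ⟨fun h => ⟨fun w hw => h w ⟨w, hw, 0, U.zero_mem, add_zero w⟩,
    fun u hu => h u ⟨0, W.zero_mem, u, hu, zero_add u⟩⟩, ?_⟩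
  rintro ⟨hW, hU⟩ _ ⟨w, hw, u, hu, rfl⟩
  rw [map_add, LinearMap.add_apply, hW w hw, hU u hu, add_zero]

theorem LinearMap.BilinForm.orthogonal_inf [FiniteDimensional k V] (hB : B.Nondegenerate)
    (hrefl : B.IsRefl) (W U : Submodule k V) :
    B.orthogonal (W ⊓ U) = B.orthogonal W ⊔ B.orthogonal U := by
  conv_lhs => rw [← orthogonal_orthogonal hB hrefl W, ← orthogonal_orthogonal hB hrefl U,
    ← orthogonal_sup, orthogonal_orthogonal hB hrefl]

end Orthogonal

section Adjoint

variable {k V : Type*} [Field k] [AddCommGroup V] [Module k V]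
  {B : LinearMap.BilinForm k V} {N U : Module.End k V}

theorem LinearMap.IsAdjointPair.ker_pow_le_orthogonal_range_pow
    (hadj : IsAdjointPair B B N (U * N)) (hcomm : Commute U N) (j : ℕ) :
    ker (N ^ j) ≤ B.orthogonal (range (N ^ j)) := by
  intro u hu
  rw [BilinForm.mem_orthogonal_iff]
  rintro _ ⟨v, rfl⟩
  change B ((N ^ j) v) u = 0
  rw [hadj.pow_s19 j v u, hcomm.mul_pow, Module.End.mul_apply, mem_ker.mp hu, map_zero, map_zero]

theorem LinearMap.IsAdjointPair.orthogonal_range_pow [FiniteDimensional k V]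
    (hadj : IsAdjointPair B B N (U * N)) (hcomm : Commute U N) (hB : B.Nondegenerate) (j : ℕ) :
    B.orthogonal (range (N ^ j)) = ker (N ^ j) := by
  refine (eq_of_le_of_finrank_le (hadj.ker_pow_le_orthogonal_range_pow hcomm j) ?_).symm
  have := finrank_range_add_finrank_ker (N ^ j)
  rw [BilinForm.finrank_orthogonal hB]
  omega

theorem LinearMap.IsAdjointPair.orthogonal_ker_pow [FiniteDimensional k V]
    (hadj : IsAdjointPair B B N (U * N)) (hcomm : Commute U N) (hB : B.Nondegenerate)
    (hrefl : B.IsRefl) (j : ℕ) :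
    B.orthogonal (ker (N ^ j)) = range (N ^ j) := by
  rw [← hadj.orthogonal_range_pow hcomm hB, BilinForm.orthogonal_orthogonal hB hrefl]

variable (B N) in
def LinearMap.BilinForm.kerPowForm (m : ℕ) : LinearMap.BilinForm k (ker (N ^ (m + 1))) :=
  B.compl₁₂ (ker (N ^ (m + 1))).subtype ((N ^ m) ∘ₗ (ker (N ^ (m + 1))).subtype)

@[simp]
theorem LinearMap.BilinForm.kerPowForm_apply (m : ℕ) (u v : ker (N ^ (m + 1))) :
    B.kerPowForm N m u v = B u ((N ^ m) v) :=
  rfl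

theorem LinearMap.BilinForm.kerPowForm_skew (hsymm : B.IsSymm)
    (hadj : IsAdjointPair B B N (U * N)) (hcomm : Commute U N) (hU : ∀ x ∈ ker N, U x = -x)
    {m : ℕ} (hm : Odd m) (u v : ker (N ^ (m + 1))) :
    B.kerPowForm N m u v = -B.kerPowForm N m v u := by
  have hv : (N ^ m) v ∈ ker N := by
    rw [mem_ker, ← Module.End.mul_apply, ← pow_succ']
    exact v.2
  have hUv : (U ^ m) ((N ^ m) v) = -(N ^ m) v := by
    rw [Module.End.pow_apply_of_apply_eq_smul (by rw [hU _ hv, neg_one_smul]), hm.neg_one_pow,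
      neg_one_smul]
  rw [kerPowForm_apply, kerPowForm_apply, hsymm.eq v, hadj.pow_s19 m, hcomm.mul_pow,
    Module.End.mul_apply, hUv, map_neg, neg_neg]

theorem LinearMap.BilinForm.ker_kerPowForm [FiniteDimensional k V] (hB : B.Nondegenerate)
    (hsymm : B.IsSymm) (hadj : IsAdjointPair B B N (U * N)) (hcomm : Commute U N) (m : ℕ) :
    ker (B.kerPowForm N m) =
      (ker (N ^ m) ⊔ map N (ker (N ^ (m + 2)))).comap (ker (N ^ (m + 1))).subtype := by
  ext u
  have hu : (u : V) ∈ ker (N ^ (m + 1)) := u.2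
  calc u ∈ ker (B.kerPowForm N m)
      ↔ (u : V) ∈ B.orthogonal (map (N ^ m) (ker (N ^ (m + 1)))) := by
        simp [mem_orthogonal_iff, LinearMap.ext_iff, hsymm.eq (u : V)]
    _ ↔ (u : V) ∈ ker (N ^ m) ⊔ range N := by
        have hker : B.orthogonal (ker N) = range N := by
          simpa using hadj.orthogonal_ker_pow hcomm hB hsymm.isRefl 1
        rw [N.map_pow_ker_pow_succ, orthogonal_inf hB hsymm.isRefl,
          hadj.orthogonal_range_pow hcomm hB, hker]
    _ ↔ _ := by
        rw [mem_comap, ← N.ker_pow_succ_inf_sup_range, Submodule.mem_inf]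
        simp [hu]

theorem LinearMap.IsAdjointPair.even_two_mul_finrank_ker_pow_sub [FiniteDimensional k V]
    (hchar : (2 : k) ≠ 0) (hB : B.Nondegenerate) (hsymm : B.IsSymm)
    (hadj : IsAdjointPair B B N (U * N)) (hcomm : Commute U N) (hU : ∀ x ∈ ker N, U x = -x)
    {m : ℕ} (hm : Odd m) :
    Even (2 * (finrank k (ker (N ^ (m + 1))) : ℤ) - finrank k (ker (N ^ m))
      - finrank k (ker (N ^ (m + 2)))) := by
  rw [← N.finrank_ker_pow_succ_sub_finrank_sup]
  have hS : ker (N ^ m) ⊔ map N (ker (N ^ (m + 2))) ≤ ker (N ^ (m + 1)) :=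
    sup_le (N.ker_pow_mono m.le_succ) ((N.map_ker_pow_succ (m + 1)).trans_le inf_le_right)
  have hrank := finrank_range_add_finrank_ker (B.kerPowForm N m)
  rw [BilinForm.ker_kerPowForm hB hsymm hadj hcomm, (comapSubtypeEquivOfLe hS).finrank_eq] at hrank
  have heven := BilinForm.even_finrank_range_of_skew hchar
    (BilinForm.kerPowForm_skew hsymm hadj hcomm hU hm)
  rw [← hrank, Nat.cast_add, add_sub_cancel_right]
  exact heven.natCast

end Adjoint

section Isometry

variable {k V : Type*} [Field k] [AddCommGroup V] [Module k V] {M : V ≃ₗ[k] V} {l : k}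

theorem LinearMap.IsOrthogonal.isAdjointPair_sub_smul_one {B : LinearMap.BilinForm k V}
    (hM : B.IsOrthogonal M) (hl : l * l = 1) :
    IsAdjointPair B B ⇑((M : Module.End k V) - l • 1)
      ⇑((-l) • (M.symm : Module.End k V) * ((M : Module.End k V) - l • 1)) := by
  have hadj : IsAdjointPair B B ⇑M ⇑M.symm := fun u v => by simpa using hM u (M.symm v)
  have hsymm : (M.symm : Module.End k V) - l • 1 =
      (-l) • (M.symm : Module.End k V) * ((M : Module.End k V) - l • 1) := by
    ext x
    simp [smul_sub, smul_smul, hl]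
  rw [← hsymm]
  exact hadj.sub (isAdjointPair_one.smul l)

theorem LinearEquiv.neg_smul_symm_apply_of_mem_ker (hl : l * l = 1) {x : V}
    (hx : x ∈ ker ((M : Module.End k V) - l • 1)) :
    ((-l) • (M.symm : Module.End k V)) x = -x := by
  have hMx : M x = l • x := by simpa [sub_eq_zero] using hx
  have hMx_symm : M.symm x = l • x := by
    rw [M.symm_apply_eq, map_smul, hMx, smul_smul, hl, one_smul]
  simp [hMx_symm, smul_smul, hl]

theorem LinearEquiv.commute_smul_symm_sub_smul_one (c l : k) :
    Commute (c • (M.symm : Module.End k V)) ((M : Module.End k V) - l • 1) := by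
  refine Commute.smul_left (Commute.sub_right ?_ (Commute.smul_right (Commute.one_right _) l)) c
  ext x
  simp

end Isometry

theorem jordan_blocks_pm_one_even_general {k V : Type*} [Field k]
    [AddCommGroup V] [Module k V] [FiniteDimensional k V]
    (hchar : (2 : k) ≠ 0) (M : V ≃ₗ[k] V)
    (Ψ : V →ₗ[k] V →ₗ[k] k)
    (hsymm : ∀ u v, Ψ u v = Ψ v u)
    (hnd : ∀ u : V, (∀ v : V, Ψ u v = 0) → u = 0)
    (hM : ∀ u v, Ψ (M u) (M v) = Ψ u v)
    (l : k) (hl : l = 1 ∨ l = -1) (m : ℕ) (hm : 1 ≤ m) (hmeven : Even m) :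
    Even (jordanBlockCount (M : V →ₗ[k] V) l m) := by
  obtain ⟨n, rfl⟩ : ∃ n, m = n + 1 := ⟨m - 1, by omega⟩
  have hn : Odd n := by simpa [Nat.even_add_one] using hmeven
  have hll : l * l = 1 := by rcases hl with rfl | rfl <;> norm_num
  have hΨ : BilinForm.IsSymm Ψ := ⟨hsymm⟩
  have hΨ_nondeg : Ψ.Nondegenerate := hΨ.isRefl.nondegenerate_iff_separatingLeft.mpr hnd
  have hadj := IsOrthogonal.isAdjointPair_sub_smul_one hM hll
  rw [jordanBlockCount, Nat.add_sub_cancel]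
  exact hadj.even_two_mul_finrank_ker_pow_sub hchar hΨ_nondeg hΨ
    (M.commute_smul_symm_sub_smul_one (-l) l) (fun _ => M.neg_smul_symm_apply_of_mem_ker hll) hn

/-- If an automorphism `M` of a finite-dimensional space over an algebraically
closed field of characteristic not 2 preserves a non-degenerate symmetric
bilinear form, then for each even size `m ≥ 1` and eigenvalue `±1` the number
of Jordan blocks of that size and eigenvalue is even. -/
theorem jordan_blocks_pm_one_even {k V : Type*} [Field k]
    [IsAlgClosed k] [AddCommGroup V] [Module k V] [FiniteDimensional k V]
    (hchar : (2 : k) ≠ 0) (M : V ≃ₗ[k] V)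
    (Ψ : V →ₗ[k] V →ₗ[k] k)
    (hsymm : ∀ u v, Ψ u v = Ψ v u)
    (hnd : ∀ u : V, (∀ v : V, Ψ u v = 0) → u = 0)
    (hM : ∀ u v, Ψ (M u) (M v) = Ψ u v)
    (l : k) (hl : l = 1 ∨ l = -1) (m : ℕ) (hm : 1 ≤ m) (hmeven : Even m) :
    Even (jordanBlockCount (M : V →ₗ[k] V) l m) :=
  jordan_blocks_pm_one_even_general hchar M Ψ hsymm hnd hM l hl m hm hmeven
end
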